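/- The backward sampling algorithm is correct: if phenotypes Y_1,...,Y_n are sampled sequentially with P(Y_i=1 | Y_1,...,Y_{i-1}) = π_i·B_i(Z_{i-1}+1)/B_{i-1}(Z_{i-1}) (where Z_{i-1}=Y_1+...+Y_{i-1}), then the resulting joint distribution of (Y_1,...,Y_n) equals the law of n independent Bernoulli(π_i) variables conditioned on the event {Y_1+...+Y_n = n_1}. In particular every sampled configuration has exactly n_1 ones. -/

import Mathlib

open scoped Classical
open Finset

/-- Product Bernoulli weight of a configuration: individual `i+1` (1-based) has
probability `π (i+1)` of being a case (`true`). -/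
noncomputable def wgt (n : ℕ) (π : ℕ → ℝ) (y : Fin n → Bool) : ℝ :=
  ∏ i : Fin n, if y i then π (i.1 + 1) else 1 - π (i.1 + 1)

/-- Probability of an event under the product Bernoulli law. -/
noncomputable def prb (n : ℕ) (π : ℕ → ℝ) (E : (Fin n → Bool) → Prop) : ℝ :=
  ∑ y : Fin n → Bool, if E y then wgt n π y else 0

/-- Partial sum `Z_j = Y_1 + ... + Y_j`. -/
def zsum (n : ℕ) (y : Fin n → Bool) (j : ℕ) : ℤ :=
  ((Finset.univ.filter (fun i : Fin n => i.1 < j ∧ y i)).card : ℤ)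

/-- Tail sum `Y_{i+1} + ... + Y_n`. -/
def tcnt (n : ℕ) (y : Fin n → Bool) (i : ℕ) : ℤ :=
  ((Finset.univ.filter (fun k : Fin n => i ≤ k.1 ∧ y k)).card : ℤ)

/-- Forward quantity `F_i(m) = P(Z_i = m)`. -/
noncomputable def fwd (n : ℕ) (π : ℕ → ℝ) (i : ℕ) (m : ℤ) : ℝ :=
  prb n π (fun y => zsum n y i = m)

/-- Backward quantity `B_i(m) = P(Y_{i+1} + ... + Y_n = n1 - m)`. -/
noncomputable def bwd (n : ℕ) (π : ℕ → ℝ) (n1 : ℤ) (i : ℕ) (m : ℤ) : ℝ :=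
  prb n π (fun y => tcnt n y i = n1 - m)


/-- The law of the heterogeneous Markov chain generated by backward sampling:
product over individuals of the transition probabilities
`π_i·B_i(Z_{i-1}+1)/B_{i-1}(Z_{i-1})` (case) and
`(1-π_i)·B_i(Z_{i-1})/B_{i-1}(Z_{i-1})` (control). -/
noncomputable def sampLaw (n : ℕ) (π : ℕ → ℝ) (n1 : ℤ) (y : Fin n → Bool) : ℝ :=
  ∏ i : Fin n,
    if y i then
      π (i.1 + 1) * bwd n π n1 (i.1 + 1) (zsum n y i.1 + 1) / bwd n π n1 i.1 (zsum n y i.1)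
    else
      (1 - π (i.1 + 1)) * bwd n π n1 (i.1 + 1) (zsum n y i.1) / bwd n π n1 i.1 (zsum n y i.1)

/-!
With `g j := B_j(Z_j(y))`, the `i`-th transition factor of `sampLaw` is the Bernoulli weight of
`y i` times `g (i + 1) / g i`, so the product telescopes to `wgt y · B_n(Z_n(y)) / B_0(0)`; here
`B_n(m)` is the indicator of `m = n1` and `B_0(0) = P(Z_n = n1)`. Telescoping needs `g j ≠ 0`: when
`Z_n(y) = n1`, `y` itself witnesses `g j > 0`; otherwise a vanishing `g j` makes its factor, and
with it the whole law, zero (division by zero is `0`).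
-/

theorem prod_range_div_of_ne_zero {K : Type*} [CommGroupWithZero K] (f : ℕ → K) {n : ℕ}
    (h0 : f 0 ≠ 0) (hf : ∀ i < n, f i ≠ 0) : ∏ i ∈ range n, f (i + 1) / f i = f n / f 0 := by
  induction n with
  | zero => simp [h0]
  | succ n ih =>
    rw [prod_range_succ, ih fun i hi => hf i (by omega), mul_comm,
      div_mul_div_cancel₀ (hf n n.lt_succ_self)]

section BackwardSampling

variable {n : ℕ} {π : ℕ → ℝ} {n1 : ℤ}

lemma zsum_zero (y : Fin n → Bool) : zsum n y 0 = 0 := by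
  simp [zsum]

lemma zsum_succ (y : Fin n → Bool) {j : ℕ} (hj : j < n) :
    zsum n y (j + 1) = zsum n y j + if y ⟨j, hj⟩ then 1 else 0 := by
  simp only [zsum, card_filter, Nat.cast_sum]
  rw [← Fintype.sum_ite_eq' (⟨j, hj⟩ : Fin n) (fun k => if y k then (1 : ℤ) else 0),
    ← sum_add_distrib]
  refine sum_congr rfl fun k _ => ?_
  simp only [Fin.ext_iff]
  split_ifs <;> grind

lemma zsum_add_tcnt (y : Fin n → Bool) (i : ℕ) : zsum n y i + tcnt n y i = zsum n y n := by
  simp only [zsum, tcnt, card_filter, Nat.cast_sum, ← sum_add_distrib]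
  refine sum_congr rfl fun k _ => ?_
  split_ifs <;> grind

lemma tcnt_self (y : Fin n → Bool) : tcnt n y n = 0 := by
  simp [tcnt]

lemma wgt_pos (hπ : ∀ i, 1 ≤ i → i ≤ n → 0 < π i ∧ π i < 1) (y : Fin n → Bool) :
    0 < wgt n π y := by
  refine prod_pos fun i _ => ?_
  obtain ⟨hπ0, hπ1⟩ := hπ (i.1 + 1) (by omega) i.2
  split_ifs <;> linarith

lemma sum_wgt : ∑ y : Fin n → Bool, wgt n π y = 1 := by
  simp only [wgt, ← Fintype.prod_sum (fun (i : Fin n) (b : Bool) =>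
    if b then π (i.1 + 1) else 1 - π (i.1 + 1))]
  simp

lemma bwd_self (m : ℤ) : bwd n π n1 n m = if m = n1 then 1 else 0 := by
  simp only [bwd, prb, tcnt_self]
  by_cases h : m = n1
  · simp [h, sum_wgt]
  · simp [h, show (0 : ℤ) ≠ n1 - m by omega]

lemma bwd_zero_zero : bwd n π n1 0 0 = prb n π (fun y => zsum n y n = n1) := by
  refine sum_congr rfl fun y _ => ?_
  simp only [← zsum_add_tcnt y 0, zsum_zero, zero_add, sub_zero]

lemma bwd_zsum_pos (hπ : ∀ i, 1 ≤ i → i ≤ n → 0 < π i ∧ π i < 1) {y : Fin n → Bool}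
    (hy : zsum n y n = n1) (i : ℕ) : 0 < bwd n π n1 i (zsum n y i) := by
  have hyi : tcnt n y i = n1 - zsum n y i := by have := zsum_add_tcnt y i; omega
  refine sum_pos' (fun y' _ => ?_) ⟨y, mem_univ y, ?_⟩
  · split_ifs
    exacts [(wgt_pos hπ y').le, le_rfl]
  · rw [if_pos hyi]
    exact wgt_pos hπ y

lemma sampLaw_eq_prod (y : Fin n → Bool) :
    sampLaw n π n1 y = ∏ i : Fin n, (if y i then π (i.1 + 1) else 1 - π (i.1 + 1)) *
      (bwd n π n1 (i.1 + 1) (zsum n y (i.1 + 1)) / bwd n π n1 i.1 (zsum n y i.1)) := by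
  refine prod_congr rfl fun i _ => ?_
  rw [zsum_succ y i.2]
  by_cases hy : y i <;> simp [hy, mul_div_assoc]

lemma sampLaw_eq_of_bwd_ne_zero {y : Fin n → Bool} (h0 : bwd n π n1 0 0 ≠ 0)
    (hy : ∀ i < n, bwd n π n1 i (zsum n y i) ≠ 0) :
    sampLaw n π n1 y = wgt n π y * bwd n π n1 n (zsum n y n) / bwd n π n1 0 0 := by
  rw [sampLaw_eq_prod, prod_mul_distrib, ← wgt,
    Fin.prod_univ_eq_prod_range (fun j => bwd n π n1 (j + 1) (zsum n y (j + 1)) /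
      bwd n π n1 j (zsum n y j)),
    prod_range_div_of_ne_zero (fun j => bwd n π n1 j (zsum n y j)) (by rwa [zsum_zero]) hy,
    zsum_zero, mul_div_assoc]

lemma sampLaw_eq_zero_of_bwd_eq_zero {y : Fin n → Bool} {i : ℕ} (hi : i < n)
    (hy : bwd n π n1 i (zsum n y i) = 0) : sampLaw n π n1 y = 0 := by
  rw [sampLaw_eq_prod]
  exact prod_eq_zero (mem_univ ⟨i, hi⟩) (by simp [hy])

end BackwardSampling

theorem backward_sampling_correct_general (n : ℕ) (π : ℕ → ℝ) (n1 : ℤ)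
    (hπ : ∀ i, 1 ≤ i → i ≤ n → 0 < π i ∧ π i < 1)
    (hB : 0 < bwd n π n1 0 0) :
    (∀ y : Fin n → Bool,
      sampLaw n π n1 y =
        if zsum n y n = n1 then wgt n π y / prb n π (fun y' => zsum n y' n = n1) else 0) ∧
    (∀ y : Fin n → Bool, sampLaw n π n1 y ≠ 0 → zsum n y n = n1) := by
  have law : ∀ y : Fin n → Bool, sampLaw n π n1 y =
      if zsum n y n = n1 then wgt n π y / prb n π (fun y' => zsum n y' n = n1) else 0 := by
    intro y
    rw [← bwd_zero_zero]
    by_cases hpath : ∀ i < n, bwd n π n1 i (zsum n y i) ≠ 0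
    · rw [sampLaw_eq_of_bwd_ne_zero hB.ne' hpath, bwd_self]
      split_ifs <;> simp
    · push Not at hpath
      obtain ⟨i, hi, hzero⟩ := hpath
      have hy : zsum n y n ≠ n1 := fun hy => (bwd_zsum_pos hπ hy i).ne' hzero
      rw [sampLaw_eq_zero_of_bwd_eq_zero hi hzero, if_neg hy]
  exact ⟨law, fun y hy => by_contra fun h => hy (by rw [law, if_neg h])⟩

/-- Correctness of backward sampling: the sampled law is the conditional law of
independent Bernoullis given the constraint, and every sampled configuration
has exactly `n1` cases. -/
theorem backward_sampling_correct (n : ℕ) (π : ℕ → ℝ) (n1 : ℤ)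
    (hπ : ∀ i, 1 ≤ i → i ≤ n → 0 < π i ∧ π i < 1)
    (hn1 : 0 ≤ n1 ∧ n1 ≤ (n : ℤ)) (hB : 0 < bwd n π n1 0 0) :
    (∀ y : Fin n → Bool,
      sampLaw n π n1 y =
        if zsum n y n = n1 then wgt n π y / prb n π (fun y' => zsum n y' n = n1) else 0) ∧
    (∀ y : Fin n → Bool, sampLaw n π n1 y ≠ 0 → zsum n y n = n1) :=
  backward_sampling_correct_general n π n1 hπ hB
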